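/- (De Finetti's consistency theorem, general case) Let A be any (finite or infinite) boolean algebra, E = {h₁,…,h_m} a finite subset of A, and β : E → [0,1]. Then β extends to a state of A if and only if there is no function s : E → ℝ such that Σⱼ s(hⱼ)(β(hⱼ) − η(hⱼ)) < 0 for every boolean homomorphism η : A → {0,1}. -/

import Mathlib

/-- `f` is a homomorphism of boolean algebras. -/
def IsBAHom {A B : Type*} [BooleanAlgebra A] [BooleanAlgebra B] (f : A → B) : Prop :=
  (∀ x : A, f xᶜ = (f x)ᶜ) ∧ (∀ x y : A, f (x ⊓ y) = f x ⊓ f y) ∧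
  (∀ x y : A, f (x ⊔ y) = f x ⊔ f y)

/-- A state of a boolean algebra: a `[0,1]`-valued, normalized, finitely additive
function. -/
def IsState {A : Type*} [BooleanAlgebra A] (σ : A → ℝ) : Prop :=
  (∀ x : A, 0 ≤ σ x ∧ σ x ≤ 1) ∧ σ ⊤ = 1 ∧
  ∀ x y : A, x ⊓ y = ⊥ → σ (x ⊔ y) = σ x + σ y

/-! Restricted to `E`, a state `σ` is the convex combination, with weights `σ (minterm E S)`, of
the indicator vectors of the sets `S ⊆ E`; a minterm that is not `⊥` lies in a prime filter, so its
indicator vector is the restriction of some `η ∈ hom(A)`. Conversely a convex combination of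
homomorphisms is a state. Hence `β` extends to a state iff `β|E` lies in the convex hull of the
finitely many vectors `η|E`, and by the separating hyperplane theorem this fails exactly when some
`s` makes `∑ s_j (β_j - η_j)` negative at every `η`. -/

section BooleanHom
variable {A : Type*} [BooleanAlgebra A] {η : A → Bool}

theorem IsBAHom.map_bot (hη : IsBAHom η) : η ⊥ = false := by
  have h := hη.2.1 ⊥ ⊥ᶜ
  rwa [inf_compl_eq_bot, hη.1, inf_compl_eq_bot] at h

theorem IsBAHom.map_top (hη : IsBAHom η) : η ⊤ = true := by
  simpa [hη.map_bot] using hη.1 ⊥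

theorem IsBAHom.monotone (hη : IsBAHom η) : Monotone η := fun x y hxy => by
  rw [← inf_eq_left.2 hxy, hη.2.1]
  exact inf_le_right

theorem exists_isBAHom_apply_eq_true {a : A} (ha : a ≠ ⊥) :
    ∃ η : A → Bool, IsBAHom η ∧ η a = true := by
  classical
  obtain ⟨J, hJ, -, haJ⟩ := DistribLattice.prime_ideal_of_disjoint_filter_ideal
    (F := Order.PFilter.principal a) (I := Order.Ideal.principal ⊥) <| by
      refine Set.disjoint_left.2 fun x hax hx => ha (le_bot_iff.1 ?_)
      simp only [SetLike.mem_coe, Order.PFilter.mem_principal, Order.Ideal.mem_principal] at hax hx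
      exact hax.trans hx
  have ha : a ∉ J := Set.disjoint_left.1 haJ (Order.PFilter.mem_principal.2 le_rfl)
  have hcompl : ∀ x, xᶜ ∈ J ↔ x ∉ J := fun x =>
    ⟨fun hxc hx => ha (J.lower le_top (by simpa using J.sup_mem hx hxc)),
      hJ.compl_mem_of_notMem⟩
  have hinf : ∀ x y, x ⊓ y ∈ J ↔ x ∈ J ∨ y ∈ J := fun x y =>
    ⟨hJ.mem_or_mem, fun h => h.elim (J.lower inf_le_left) (J.lower inf_le_right)⟩
  refine ⟨fun x => decide (x ∉ J), ⟨fun x => ?_, fun x y => ?_, fun x y => ?_⟩, by simpa⟩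
  · simp [hcompl]
  · simp [hinf]
  · simp [Order.Ideal.sup_mem_iff]

end BooleanHom

section State
variable {A : Type*} [BooleanAlgebra A] {σ : A → ℝ}

theorem IsState.map_bot (hσ : IsState σ) : σ ⊥ = 0 := by
  have h := hσ.2.2 ⊥ ⊥ (inf_idem ⊥)
  rw [sup_idem] at h
  linarith

theorem IsState.apply_eq_inf_add_inf_compl (hσ : IsState σ) (x a : A) :
    σ x = σ (x ⊓ a) + σ (x ⊓ aᶜ) := by
  rw [← hσ.2.2 _ _ (disjoint_compl_right.mono inf_le_right inf_le_right).eq_bot,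
    ← inf_sup_left, sup_compl_eq_top, inf_top_eq]

theorem convex_setOf_isState : Convex ℝ {σ : A → ℝ | IsState σ} := by
  intro σ hσ τ hτ a b ha hb hab
  refine ⟨fun x => ⟨?_, ?_⟩, ?_, fun x y hxy => ?_⟩
  · have := (hσ.1 x).1; have := (hτ.1 x).1
    simp only [Pi.add_apply, Pi.smul_apply, smul_eq_mul]; positivity
  · have := (hσ.1 x).2; have := (hτ.1 x).2
    simp only [Pi.add_apply, Pi.smul_apply, smul_eq_mul]; nlinarith
  · simp [hσ.2.1, hτ.2.1, hab]
  · simp only [Pi.add_apply, Pi.smul_apply, smul_eq_mul, hσ.2.2 x y hxy, hτ.2.2 x y hxy]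
    ring

theorem IsBAHom.isState {η : A → Bool} (hη : IsBAHom η) :
    IsState fun x => if η x then 1 else 0 := by
  refine ⟨fun x => by dsimp only; split_ifs <;> norm_num, by simp [hη.map_top], fun x y hxy => ?_⟩
  have hdisj : η x ⊓ η y = false := by rw [← hη.2.1, hxy, hη.map_bot]
  dsimp only
  rw [hη.2.2]
  cases hx : η x <;> cases hy : η y <;> simp_all

end State

section Minterm
variable {A : Type*} [BooleanAlgebra A] [DecidableEq A]

def minterm (E S : Finset A) : A :=
  S.inf id ⊓ (E \ S).inf compl

variable {E S : Finset A} {a h : A}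

theorem minterm_le (hh : h ∈ S) : minterm E S ≤ h :=
  inf_le_left.trans (Finset.inf_le (f := id) hh)

theorem minterm_le_compl (hE : h ∈ E) (hS : h ∉ S) : minterm E S ≤ hᶜ :=
  inf_le_right.trans (Finset.inf_le (f := compl) (Finset.mem_sdiff.2 ⟨hE, hS⟩))

theorem minterm_insert_insert (ha : a ∉ E) :
    minterm (insert a E) (insert a S) = minterm E S ⊓ a := by
  rw [minterm, minterm, Finset.insert_sdiff_insert, Finset.sdiff_insert_of_notMem ha,
    Finset.inf_insert, id]
  ac_rfl

theorem minterm_insert (ha : a ∉ E) (hS : S ⊆ E) :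
    minterm (insert a E) S = minterm E S ⊓ aᶜ := by
  rw [minterm, minterm, Finset.insert_sdiff_of_notMem _ (fun h => ha (hS h)), Finset.inf_insert]
  ac_rfl

theorem IsState.sum_minterm {σ : A → ℝ} (hσ : IsState σ) (E : Finset A) (x : A) :
    ∑ S ∈ E.powerset, σ (x ⊓ minterm E S) = σ x := by
  induction E using Finset.induction_on with
  | empty => simp [minterm]
  | insert a E ha ih =>
    rw [Finset.sum_powerset_insert ha, ← ih, ← Finset.sum_add_distrib]
    refine Finset.sum_congr rfl fun S hS => ?_
    rw [Finset.mem_powerset] at hS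
    rw [minterm_insert ha hS, minterm_insert_insert ha, ← inf_assoc, ← inf_assoc,
      add_comm, ← hσ.apply_eq_inf_add_inf_compl]

theorem IsState.apply_eq_sum_minterm {σ : A → ℝ} (hσ : IsState σ) (hh : h ∈ E) :
    σ h = ∑ S ∈ E.powerset, σ (minterm E S) * if h ∈ S then 1 else 0 := by
  rw [← hσ.sum_minterm E h]
  refine Finset.sum_congr rfl fun S _ => ?_
  by_cases hS : h ∈ S
  · rw [if_pos hS, mul_one, inf_eq_right.2 (minterm_le hS)]
  · rw [if_neg hS, mul_zero, ← hσ.map_bot]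
    exact congrArg σ (disjoint_compl_right.mono_right (minterm_le_compl hh hS)).eq_bot

theorem IsBAHom.apply_eq_decide_mem {η : A → Bool} (hη : IsBAHom η)
    (hS : η (minterm E S) = true) (hh : h ∈ E) : η h = decide (h ∈ S) := by
  by_cases hhS : h ∈ S
  · have := hη.monotone (minterm_le (E := E) hhS)
    rw [hS] at this
    simpa [hhS] using top_le_iff.1 this
  · have := hη.monotone (minterm_le_compl hh hhS)
    rw [hS, hη.1] at this
    simpa [hhS] using top_le_iff.1 this

end Minterm

theorem mem_convexHull_iff_not_exists_forall_sum_lt {ι : Type*} [Fintype ι] {V : Set (ι → ℝ)}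
    (hV : V.Finite) (b : ι → ℝ) :
    b ∈ convexHull ℝ V ↔ ¬ ∃ s : ι → ℝ, ∀ v ∈ V, ∑ i, s i * (b i - v i) < 0 := by
  classical
  constructor
  · rintro hb ⟨s, hs⟩
    let L : (ι → ℝ) →ₗ[ℝ] ℝ := ∑ i, s i • LinearMap.proj i
    have hL : ∀ v, ∑ i, s i * (b i - v i) = L b - L v := fun v => by
      simp [L, mul_sub, Finset.sum_sub_distrib]
    have hhull : convexHull ℝ V ⊆ {v | L b < L v} :=
      (convex_halfSpace_gt L.isLinear _).convexHull_subset_iff.2 fun v hv => by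
        have := hs v hv
        rw [hL] at this
        exact sub_neg.1 this
    exact lt_irrefl (L b) (hhull hb)
  · intro hns
    by_contra hb
    obtain ⟨f, u, hfb, hfV⟩ :=
      geometric_hahn_banach_point_closed (convex_convexHull ℝ V) (hV.isClosed_convexHull ℝ) hb
    refine hns ⟨fun i => f (Pi.single i 1), fun v hv => ?_⟩
    have hf : f b - f v = ∑ i, f (Pi.single i 1) * (b i - v i) := by
      rw [← map_sub, ← ContinuousLinearMap.coe_coe, LinearMap.pi_apply_eq_sum_univ]
      simp only [ContinuousLinearMap.coe_coe, smul_eq_mul, Pi.sub_apply, mul_comm]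
      refine Finset.sum_congr rfl fun i _ => ?_
      congr 2
      ext j
      simp [Pi.single_apply, eq_comm]
    linarith [hfV v (subset_convexHull ℝ V hv)]

section Consistency
variable {A : Type*} [BooleanAlgebra A]

def homIndicators (A : Type*) [BooleanAlgebra A] : Set (A → ℝ) :=
  {f | ∃ η : A → Bool, IsBAHom η ∧ f = fun x => if η x then 1 else 0}

theorem convexHull_homIndicators_subset : convexHull ℝ (homIndicators A) ⊆ {σ | IsState σ} :=
  convex_setOf_isState.convexHull_subset_iff.2 fun _ ⟨_, hη, hf⟩ => hf ▸ hη.isState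

theorem finite_image_funLeft_homIndicators (E : Finset A) :
    (LinearMap.funLeft ℝ ℝ ((↑) : E → A) '' homIndicators A).Finite := by
  refine (Set.finite_range fun c : E → Bool => fun i => if c i then (1 : ℝ) else 0).subset ?_
  rintro _ ⟨_, ⟨η, -, rfl⟩, rfl⟩
  exact ⟨fun i => η i, rfl⟩

theorem IsState.funLeft_mem_convexHull {σ : A → ℝ} (hσ : IsState σ) (E : Finset A) :
    LinearMap.funLeft ℝ ℝ ((↑) : E → A) σ ∈
      convexHull ℝ (LinearMap.funLeft ℝ ℝ ((↑) : E → A) '' homIndicators A) := by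
  classical
  set w : Finset A → ℝ := fun S => σ (minterm E S)
  set z : Finset A → E → ℝ := fun S i => if (i : A) ∈ S then 1 else 0
  have hw1 : ∑ S ∈ E.powerset, w S = 1 := by
    simpa [w, hσ.2.1] using hσ.sum_minterm E ⊤
  have hσ_eq : LinearMap.funLeft ℝ ℝ ((↑) : E → A) σ = E.powerset.centerMass w z := by
    rw [Finset.centerMass_eq_of_sum_1 _ _ hw1]
    ext i
    simp [w, z, Finset.sum_apply, hσ.apply_eq_sum_minterm i.2]
  rw [hσ_eq, ← Finset.centerMass_filter_ne_zero]
  refine Finset.centerMass_mem_convexHull _ (fun S _ => (hσ.1 _).1)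
    (by rw [Finset.sum_filter_ne_zero, hw1]; exact one_pos) fun S hS => ?_
  have hne : minterm E S ≠ ⊥ := fun h => (Finset.mem_filter.1 hS).2 (by simp [w, h, hσ.map_bot])
  obtain ⟨η, hη, hηS⟩ := exists_isBAHom_apply_eq_true hne
  exact ⟨_, ⟨η, hη, rfl⟩, funext fun i => by simp [z, hη.apply_eq_decide_mem hηS i.2]⟩

theorem exists_state_eqOn_iff_mem_convexHull (E : Finset A) (β : A → ℝ) :
    (∃ σ : A → ℝ, IsState σ ∧ ∀ h ∈ E, σ h = β h) ↔
      LinearMap.funLeft ℝ ℝ ((↑) : E → A) β ∈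
        convexHull ℝ (LinearMap.funLeft ℝ ℝ ((↑) : E → A) '' homIndicators A) := by
  constructor
  · rintro ⟨σ, hσ, hσβ⟩
    convert hσ.funLeft_mem_convexHull E using 1
    ext i
    exact (hσβ i i.2).symm
  · rw [← LinearMap.image_convexHull]
    rintro ⟨σ, hσ, hσβ⟩
    exact ⟨σ, convexHull_homIndicators_subset hσ, fun h hh => congrFun hσβ ⟨h, hh⟩⟩

end Consistency

theorem stmt_19_general (A : Type*) [BooleanAlgebra A]
    (E : Finset A) (β : A → ℝ) :
    (∃ σ : A → ℝ, IsState σ ∧ ∀ h ∈ E, σ h = β h) ↔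
    ¬ ∃ s : A → ℝ, ∀ η : A → Bool, IsBAHom η →
        ∑ h ∈ E, s h * (β h - (if η h then 1 else 0)) < 0 := by
  rw [exists_state_eqOn_iff_mem_convexHull,
    mem_convexHull_iff_not_exists_forall_sum_lt (finite_image_funLeft_homIndicators E)]
  simp only [Set.forall_mem_image, homIndicators, Set.mem_ofPred_eq, forall_exists_index, and_imp,
    forall_comm (α := A → ℝ), forall_eq, LinearMap.funLeft_apply]
  refine not_congr ⟨fun ⟨s, hs⟩ => ⟨Function.extend (↑) s 0, fun η hη => ?_⟩,
    fun ⟨s, hs⟩ => ⟨fun i => s i, fun η hη => ?_⟩⟩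
  · rw [← Finset.sum_coe_sort]
    simpa only [Subtype.val_injective.extend_apply] using hs η hη
  · rw [Finset.sum_coe_sort E fun h => s h * (β h - if η h then 1 else 0)]
    exact hs η hη

theorem stmt_19 (A : Type*) [BooleanAlgebra A] [Nontrivial A]
    (E : Finset A) (β : A → ℝ) (hβ : ∀ h ∈ E, 0 ≤ β h ∧ β h ≤ 1) :
    (∃ σ : A → ℝ, IsState σ ∧ ∀ h ∈ E, σ h = β h) ↔
    ¬ ∃ s : A → ℝ, ∀ η : A → Bool, IsBAHom η →
        ∑ h ∈ E, s h * (β h - (if η h then 1 else 0)) < 0 :=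
  stmt_19_general A E β
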